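/- Let w ∈ 𝔚_p, let α ∈ (Φ⁺ \ Φ_p⁺) ∩ w⁻¹Φ⁻, and let α_j ∈ Δ_p be such that α + α_j ∈ Φ⁺ \ Φ_p⁺. Then α + α_j ∈ (Φ⁺ \ Φ_p⁺) ∩ w⁻¹Φ⁻, i.e., w(α + α_j) ∈ Φ⁻. -/

import Mathlib

open scoped Classical RealInnerProductSpace

noncomputable section

namespace Weng

/-- The completed Riemann zeta function `ζ̂(s) = π^(-s/2) Γ(s/2) ζ(s)`. -/
def zetaHat (s : ℂ) : ℂ := completedRiemannZeta s

/-- The entire Riemann xi function `ξ(s) = s (s-1) ζ̂(s)`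
(written in terms of the entire function `Λ₀` so that the removable singularities
at `s = 0, 1` are correctly filled in). -/
def xi (s : ℂ) : ℂ := s * (s - 1) * completedRiemannZeta₀ s + 1

variable (V : Type) [NormedAddCommGroup V] [InnerProductSpace ℝ V] [FiniteDimensional ℝ V]

/-- The coroot `α^∨ = 2 α / ⟨α, α⟩` of a vector `α`. -/
def coroot (α : V) : V := (2 / ⟪α, α⟫) • α

/-- Reflection in the hyperplane orthogonal to `α`. -/
def srefl (α : V) : V ≃ₗᵢ[ℝ] V := Submodule.reflection (ℝ ∙ α)ᗮ

variable {V}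

/-- A reduced irreducible crystallographic root system `Φ` in a finite dimensional real
inner product space `V`, together with a fundamental system `Δ = {α_1, …, α_r}` (indexed by
`Fin r`), the corresponding positive system `Φ⁺` (`Pos`), and the fundamental weights
`λ_1, …, λ_r` (`fw`). -/
structure RootSystemData (V : Type) [NormedAddCommGroup V] [InnerProductSpace ℝ V]
    [FiniteDimensional ℝ V] : Type where
  /-- the rank -/
  r : ℕ
  /-- the root system -/
  Φ : Finset V
  /-- the simple roots -/
  Δ : Fin r → V
  /-- the positive roots -/
  Pos : Finset V
  /-- the fundamental weights -/
  fw : Fin r → V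
  hΔinj : Function.Injective Δ
  hΔPos : ∀ j, Δ j ∈ Pos
  hspan : Submodule.span ℝ (Φ : Set V) = ⊤
  hzero : (0 : V) ∉ Φ
  hreduced : ∀ α ∈ Φ, ∀ t : ℝ, t • α ∈ (Φ : Set V) → t = 1 ∨ t = -1
  hcrys : ∀ α ∈ Φ, ∀ β ∈ Φ, ∃ n : ℤ, ⟪β, coroot V α⟫ = (n : ℝ)
  hrefl : ∀ α ∈ Φ, ∀ β ∈ Φ, β - ⟪β, coroot V α⟫ • α ∈ Φ
  hirred : ∀ S T : Finset V, S ∪ T = Φ → (∀ a ∈ S, ∀ b ∈ T, ⟪a, b⟫ = 0) →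
    S = ∅ ∨ T = ∅
  hPosSub : Pos ⊆ Φ
  hNegSub : ∀ α ∈ Pos, -α ∈ Φ
  hPosDec : ∀ α ∈ Φ, (α ∈ Pos ∧ -α ∉ Pos) ∨ (α ∉ Pos ∧ -α ∈ Pos)
  hPosComb : ∀ α ∈ Pos, ∃ c : Fin r → ℕ, α = ∑ j, (c j : ℝ) • Δ j
  hfw : ∀ i j, ⟪fw i, coroot V (Δ j)⟫ = if i = j then 1 else 0

namespace RootSystemData

variable {V : Type} [NormedAddCommGroup V] [InnerProductSpace ℝ V] [FiniteDimensional ℝ V]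
variable (d : RootSystemData V)

/-- The set `Φ⁻ = -Φ⁺` of negative roots, as a `Finset`. -/
def NegS : Finset V := d.Pos.image (fun α => -α)

/-- The Weyl vector `ρ = (1/2) Σ_{α ∈ Φ⁺} α`. -/
def rho : V := (2⁻¹ : ℝ) • ∑ α ∈ d.Pos, α

/-- The height `ht α^∨ = ⟨ρ, α^∨⟩` of the coroot of `α`. -/
def ht (α : V) : ℝ := ⟪d.rho, coroot V α⟫

/-- The Weyl group `W`, as the subgroup of the group of linear isometries of `V`
generated by the reflections in the simple roots. -/
def W : Subgroup (V ≃ₗᵢ[ℝ] V) := Subgroup.closure (Set.range fun j => srefl V (d.Δ j))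

/-- The subset `Δ_p = Δ \ {α_p}` of the simple roots, as a set of vectors. -/
def DeltaP (p : Fin d.r) : Set V := d.Δ '' {j | j ≠ p}

/-- `Δ_p` as a `Finset`. -/
def DeltaPFin (p : Fin d.r) : Finset V := (Finset.univ.filter (fun j => j ≠ p)).image d.Δ

/-- The subgroup `W_p` of `W` generated by the reflections in the simple roots in `Δ_p`. -/
def Wp (p : Fin d.r) : Subgroup (V ≃ₗᵢ[ℝ] V) :=
  Subgroup.closure ((fun j => srefl V (d.Δ j)) '' {j | j ≠ p})

/-- The root subsystem `Φ_p = Φ ∩ span_ℝ(Δ_p)`. -/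
def PhiP (p : Fin d.r) : Finset V :=
  d.Φ.filter (fun α => α ∈ Submodule.span ℝ (d.DeltaP p))

/-- The positive system `Φ_p⁺ = Φ⁺ ∩ Φ_p` of `Φ_p`. -/
def PhiPpos (p : Fin d.r) : Finset V := d.Pos ∩ d.PhiP p

/-- `ρ_p = (1/2) Σ_{α ∈ Φ_p⁺} α`. -/
def rhoP (p : Fin d.r) : V := (2⁻¹ : ℝ) • ∑ α ∈ d.PhiPpos p, α

/-- The constant `c_p = 2 ⟨λ_p - ρ_p, α_p^∨⟩`. -/
def cp (p : Fin d.r) : ℝ := 2 * ⟪d.fw p - d.rhoP p, coroot V (d.Δ p)⟫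

/-- The set `𝔚_p = {w ∈ W : Δ_p ⊆ w⁻¹(Δ ∪ Φ⁻)}`. -/
def frakW (p : Fin d.r) : Set (V ≃ₗᵢ[ℝ] V) :=
  {w | w ∈ d.W ∧ ∀ j : Fin d.r, j ≠ p →
    (w (d.Δ j) ∈ Set.range d.Δ ∨ w (d.Δ j) ∈ d.NegS)}

/-- `l_p(w) = |(Φ⁺ \ Φ_p⁺) ∩ w⁻¹ Φ⁻|`. -/
def lp (p : Fin d.r) (w : V ≃ₗᵢ[ℝ] V) : ℕ :=
  ((d.Pos \ d.PhiPpos p).filter (fun α => w α ∈ d.NegS)).card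

/-- `N_{p,w}(k,h) = #{α ∈ w⁻¹Φ⁻ : ⟨λ_p, α^∨⟩ = k, ht α^∨ = h}`. -/
def Npw (p : Fin d.r) (w : V ≃ₗᵢ[ℝ] V) (k h : ℝ) : ℕ :=
  (d.Φ.filter (fun α => w α ∈ d.NegS ∧ ⟪d.fw p, coroot V α⟫ = k ∧ d.ht α = h)).card

/-- `N_p(k,h) = #{α ∈ Φ : ⟨λ_p, α^∨⟩ = k, ht α^∨ = h}`. -/
def Np (p : Fin d.r) (k h : ℝ) : ℕ :=
  (d.Φ.filter (fun α => ⟪d.fw p, coroot V α⟫ = k ∧ d.ht α = h)).card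

/-- `M_p(k,h) = max_{w ∈ 𝔚_p} (N_{p,w}(k,h-1) - N_{p,w}(k,h))`. -/
def Mp (p : Fin d.r) (k h : ℝ) : ℤ :=
  sSup {n : ℤ | ∃ w ∈ d.frakW p, n = (d.Npw p w k (h - 1) : ℤ) - (d.Npw p w k h : ℤ)}

/-- The period `ω_p(s)`. -/
def omegaP (p : Fin d.r) (s : ℂ) : ℂ :=
  ∑ᶠ w ∈ d.frakW p,
    (∏ α ∈ d.Φ.filter (fun α => w α ∈ Set.range d.Δ ∧ α ∉ d.DeltaP p),
        ((⟪d.fw p, coroot V α⟫ : ℂ) * s + (d.ht α : ℂ) - 1)⁻¹) *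
    (∏ α ∈ d.Pos.filter (fun α => w α ∈ d.NegS ∧ α ∉ d.DeltaP p),
        zetaHat ((⟪d.fw p, coroot V α⟫ : ℂ) * s + (d.ht α : ℂ))) *
    (∏ α ∈ d.Φ.filter (fun α => -α ∈ d.Pos ∧ w (-α) ∈ d.NegS),
        (zetaHat ((⟪d.fw p, coroot V α⟫ : ℂ) * s + (d.ht α : ℂ)))⁻¹)

/-- The Weng zeta function
`ζ̂_p(s) = ω_p(s) ∏_{k ≥ 0} ∏_{h ≥ 2} ζ̂(k s + h)^{M_p(k,h)}`
(the product is finite: `M_p(k,h) = 0` outside of the displayed finite range). -/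
def zetaWeng (p : Fin d.r) (s : ℂ) : ℂ :=
  d.omegaP p s *
    ∏ k ∈ Finset.range (d.Φ.card + 2), ∏ h ∈ Finset.range (d.Φ.card + 2),
      (if 2 ≤ h then zetaHat ((k : ℂ) * s + (h : ℂ)) ^ (d.Mp p (k : ℝ) (h : ℝ)) else 1)


/-- `δ_{α,w} = 1` if `α ∈ w⁻¹Φ⁺`, and `δ_{α,w} = 0` if `α ∈ w⁻¹Φ⁻`. -/
def deltaIdx (w : V ≃ₗᵢ[ℝ] V) (α : V) : ℕ := if w α ∈ d.Pos then 1 else 0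

/-- `X̃_{p,w}(s) = ξ(2)^{|Δ_p ∩ w⁻¹Φ⁺|} ∏_{α ∈ Φ⁺ \ Δ_p} ξ(⟨λ_p,α^∨⟩ s + ht α^∨ + δ_{α,w})`. -/
def Xtilde (p : Fin d.r) (w : V ≃ₗᵢ[ℝ] V) (s : ℂ) : ℂ :=
  xi 2 ^ ((d.DeltaPFin p).filter (fun α => w α ∈ d.Pos)).card *
  ∏ α ∈ d.Pos.filter (fun α => α ∉ d.DeltaP p),
    xi ((⟪d.fw p, coroot V α⟫ : ℂ) * s + (d.ht α : ℂ) + (d.deltaIdx w α : ℂ))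

/-- The polynomial factor attached to a single `v ∈ 𝔚_p` appearing in `Q̃_{p,w}` and `Q_p`. -/
def Qfactor (p : Fin d.r) (v : V ≃ₗᵢ[ℝ] V) (s : ℂ) : ℂ :=
  (2 : ℂ) ^ ((d.DeltaPFin p).filter (fun α => v α ∈ d.Pos)).card *
  (∏ α ∈ d.Φ.filter (fun α => v α ∈ Set.range d.Δ ∧ α ∉ d.DeltaP p),
      ((⟪d.fw p, coroot V α⟫ : ℂ) * s + (d.ht α : ℂ) - 1)) *
  ∏ α ∈ d.Pos.filter (fun α => α ∉ d.DeltaP p),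
    ((⟪d.fw p, coroot V α⟫ : ℂ) * s + (d.ht α : ℂ) + (d.deltaIdx v α : ℂ)) *
      ((⟪d.fw p, coroot V α⟫ : ℂ) * s + (d.ht α : ℂ) + (d.deltaIdx v α : ℂ) - 1)

/-- The polynomial `Q̃_{p,w}(s)` (product of the `Qfactor`s over all `v ∈ 𝔚_p`, `v ≠ w`). -/
def Qtilde (p : Fin d.r) (w : V ≃ₗᵢ[ℝ] V) (s : ℂ) : ℂ :=
  ∏ᶠ v ∈ d.frakW p \ {w}, d.Qfactor p v s

/-- The polynomial `Q_p(s)` (product of the `Qfactor`s over all `v ∈ 𝔚_p`). -/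
def Qp (p : Fin d.r) (s : ℂ) : ℂ := ∏ᶠ v ∈ d.frakW p, d.Qfactor p v s

/-- The entire function `X_p(s) = Σ_{w ∈ 𝔚_p} Q̃_{p,w}(s) X̃_{p,w}(s)`. -/
def Xp (p : Fin d.r) (s : ℂ) : ℂ := ∑ᶠ w ∈ d.frakW p, d.Qtilde p w s * d.Xtilde p w s

/-- `X_{p,w}(s) = ∏_{α ∈ Φ⁺ \ Φ_p⁺} ξ(⟨λ_p,α^∨⟩ s + ht α^∨ + δ_{α,w})`. -/
def Xpw (p : Fin d.r) (w : V ≃ₗᵢ[ℝ] V) (s : ℂ) : ℂ :=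
  ∏ α ∈ d.Pos \ d.PhiPpos p,
    xi ((⟪d.fw p, coroot V α⟫ : ℂ) * s + (d.ht α : ℂ) + (d.deltaIdx w α : ℂ))

/-- The constant `C_{p,w} = ξ(2)^{|Δ_p ∩ w⁻¹Φ⁺|} ∏_{α ∈ Φ_p⁺ \ Δ_p} ξ(ht α^∨ + δ_{α,w})`. -/
def Cpw (p : Fin d.r) (w : V ≃ₗᵢ[ℝ] V) : ℂ :=
  xi 2 ^ ((d.DeltaPFin p).filter (fun α => w α ∈ d.Pos)).card *
  ∏ α ∈ (d.PhiPpos p).filter (fun α => α ∉ d.DeltaP p),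
    xi ((d.ht α : ℂ) + (d.deltaIdx w α : ℂ))

/-- `Q_{p,w}(s) = C_{p,w} Q̃_{p,w}(s)`. -/
def Qpw (p : Fin d.r) (w : V ≃ₗᵢ[ℝ] V) (s : ℂ) : ℂ := d.Cpw p w * d.Qtilde p w s

/-- `𝔚_p⁺ = {w ∈ 𝔚_p : l_p(w) < |Φ⁺ \ Φ_p⁺| / 2}`. -/
def frakWplus (p : Fin d.r) : Set (V ≃ₗᵢ[ℝ] V) :=
  {w ∈ d.frakW p | 2 * d.lp p w < (d.Pos \ d.PhiPpos p).card}

/-- `𝔚_p⁰ = {w ∈ 𝔚_p : l_p(w) = |Φ⁺ \ Φ_p⁺| / 2}`. -/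
def frakWzero (p : Fin d.r) : Set (V ≃ₗᵢ[ℝ] V) :=
  {w ∈ d.frakW p | 2 * d.lp p w = (d.Pos \ d.PhiPpos p).card}

/-- `𝔚_p‡ = {w ∈ 𝔚_p : l_p(w) = 0}`. -/
def frakWdag (p : Fin d.r) : Set (V ≃ₗᵢ[ℝ] V) :=
  {w ∈ d.frakW p | d.lp p w = 0}

/-- `E_p(s) = Σ_{w ∈ 𝔚_p⁺} Q_{p,w}(s) X_{p,w}(s) + (1/2) Σ_{w ∈ 𝔚_p⁰} Q_{p,w}(s) X_{p,w}(s)`. -/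
def Ep (p : Fin d.r) (s : ℂ) : ℂ :=
  (∑ᶠ w ∈ d.frakWplus p, d.Qpw p w s * d.Xpw p w s) +
    (2 : ℂ)⁻¹ * ∑ᶠ w ∈ d.frakWzero p, d.Qpw p w s * d.Xpw p w s

end RootSystemData

end Weng

open Weng

/-!
Since `W` permutes `Φ`, if `w(α + α_j)` were not negative it would be positive, and then
`w α_j = w(α + α_j) + (-w α)` would be a sum of two positive roots. Measuring roots by the sum of
their coordinates in the basis `Δ`, such a sum has height at least `2`, so it is neither a simple
root (height `1`) nor a negative root (height at most `-1`), contradicting `w ∈ 𝔚_p`.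
-/

namespace Weng

section Reflection

variable {V : Type} [NormedAddCommGroup V] [InnerProductSpace ℝ V]

theorem srefl_apply (α x : V) : srefl V α x = x - ⟪x, coroot V α⟫ • α := by
  rw [srefl, Submodule.reflection_orthogonal_apply, Submodule.reflection_singleton_apply, coroot,
    inner_smul_right, real_inner_self_eq_norm_sq, real_inner_comm]
  simp only [RCLike.ofReal_real_eq_id, id_eq]
  module

theorem srefl_inv (α : V) : (srefl V α)⁻¹ = srefl V α :=
  Submodule.reflection_inv

end Reflection

namespace RootSystemData

variable {V : Type} [NormedAddCommGroup V] [InnerProductSpace ℝ V] [FiniteDimensional ℝ V]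
variable (d : RootSystemData V)

theorem apply_mem_Φ_of_mem_W {w : V ≃ₗᵢ[ℝ] V} (hw : w ∈ d.W) {β : V} (hβ : β ∈ d.Φ) :
    w β ∈ d.Φ := by
  have hsimple (i : Fin d.r) {β : V} (hβ : β ∈ d.Φ) : srefl V (d.Δ i) β ∈ d.Φ := by
    rw [srefl_apply]
    exact d.hrefl _ (d.hPosSub (d.hΔPos i)) _ hβ
  induction hw using Subgroup.closure_induction'' generalizing β with
  | mem x hx =>
    obtain ⟨i, rfl⟩ := hx
    exact hsimple i hβ
  | inv_mem x hx =>
    obtain ⟨i, rfl⟩ := hx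
    exact srefl_inv (d.Δ i) ▸ hsimple i hβ
  | one => exact hβ
  | mul x y _ _ hx hy => exact hx (hy hβ)

theorem ne_zero_of_mem_Pos {α : V} (hα : α ∈ d.Pos) : α ≠ 0 :=
  fun h => d.hzero (h ▸ d.hPosSub hα)

theorem mem_NegS_iff {β : V} : β ∈ d.NegS ↔ -β ∈ d.Pos := by
  simp [NegS, neg_eq_iff_eq_neg]

theorem inner_fw_Δ_of_ne {k i : Fin d.r} (hki : k ≠ i) : ⟪d.fw k, d.Δ i⟫ = 0 := by
  have h := d.hfw k i
  rw [if_neg hki, coroot, inner_smul_right] at h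
  simpa [d.ne_zero_of_mem_Pos (d.hΔPos i)] using h

/-- The sum of the coordinates in the basis `Δ`: the vectors `(2 / ⟪α_k, α_k⟫) • λ_k` form the
basis dual to `Δ`. -/
def height : V →ₗ[ℝ] ℝ := innerₛₗ ℝ (∑ k, (2 / ⟪d.Δ k, d.Δ k⟫) • d.fw k)

theorem height_Δ (i : Fin d.r) : d.height (d.Δ i) = 1 := by
  rw [height, innerₛₗ_apply_apply, sum_inner, Finset.sum_eq_single i]
  · simpa [coroot, real_inner_smul_left, inner_smul_right] using d.hfw i i
  · intro k _ hki
    rw [real_inner_smul_left, d.inner_fw_Δ_of_ne hki, mul_zero]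
  · simp

theorem one_le_height_of_mem_Pos {α : V} (hα : α ∈ d.Pos) : 1 ≤ d.height α := by
  obtain ⟨c, rfl⟩ := d.hPosComb α hα
  have hc : ∑ j, c j ≠ 0 := by
    intro h
    apply d.ne_zero_of_mem_Pos hα
    simp [Finset.sum_eq_zero_iff.mp h]
  simp only [map_sum, map_smul, height_Δ, smul_eq_mul, mul_one]
  exact_mod_cast Nat.one_le_iff_ne_zero.mpr hc

theorem add_notMem_range_Δ {β γ : V} (hβ : β ∈ d.Pos) (hγ : γ ∈ d.Pos) :
    β + γ ∉ Set.range d.Δ := by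
  rintro ⟨i, hi⟩
  have := congrArg d.height hi
  rw [d.height_Δ, map_add] at this
  linarith [d.one_le_height_of_mem_Pos hβ, d.one_le_height_of_mem_Pos hγ]

theorem add_notMem_NegS {β γ : V} (hβ : β ∈ d.Pos) (hγ : γ ∈ d.Pos) : β + γ ∉ d.NegS := by
  intro h
  have := d.one_le_height_of_mem_Pos (d.mem_NegS_iff.mp h)
  rw [map_neg, map_add] at this
  linarith [d.one_le_height_of_mem_Pos hβ, d.one_le_height_of_mem_Pos hγ]

end RootSystemData

end Weng

theorem weng_add_simple_root_stays_negative_general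
    {V : Type} [NormedAddCommGroup V] [InnerProductSpace ℝ V] [FiniteDimensional ℝ V]
    (d : RootSystemData V) (p : Fin d.r)
    (w : V ≃ₗᵢ[ℝ] V) (hw : w ∈ d.frakW p)
    (α : V) (hwα : w α ∈ d.NegS)
    (j : Fin d.r) (hj : j ≠ p) (hsum : α + d.Δ j ∈ d.Pos \ d.PhiPpos p) :
    w (α + d.Δ j) ∈ d.NegS := by
  by_contra hnotNeg
  have hΦ : w (α + d.Δ j) ∈ d.Φ :=
    d.apply_mem_Φ_of_mem_W hw.1 (d.hPosSub (Finset.mem_sdiff.mp hsum).1)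
  have hpos : w (α + d.Δ j) ∈ d.Pos :=
    (d.hPosDec _ hΦ).elim And.left fun h => absurd (d.mem_NegS_iff.mpr h.2) hnotNeg
  have hsplit : w (d.Δ j) = w (α + d.Δ j) + -w α := by
    rw [map_add]
    abel
  have hnegα : -w α ∈ d.Pos := d.mem_NegS_iff.mp hwα
  rcases hw.2 j hj with hsimple | hneg
  · exact d.add_notMem_range_Δ hpos hnegα (hsplit ▸ hsimple)
  · exact d.add_notMem_NegS hpos hnegα (hsplit ▸ hneg)

/-- Let `w ∈ 𝔚_p`, `α ∈ (Φ⁺ \ Φ_p⁺) ∩ w⁻¹Φ⁻`, and `α_j ∈ Δ_p` with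
`α + α_j ∈ Φ⁺ \ Φ_p⁺`. Then `α + α_j ∈ (Φ⁺ \ Φ_p⁺) ∩ w⁻¹Φ⁻`, i.e. `w(α + α_j) ∈ Φ⁻`. -/
theorem weng_add_simple_root_stays_negative
    {V : Type} [NormedAddCommGroup V] [InnerProductSpace ℝ V] [FiniteDimensional ℝ V]
    (d : RootSystemData V) (p : Fin d.r)
    (w : V ≃ₗᵢ[ℝ] V) (hw : w ∈ d.frakW p)
    (α : V) (hα : α ∈ d.Pos \ d.PhiPpos p) (hwα : w α ∈ d.NegS)
    (j : Fin d.r) (hj : j ≠ p) (hsum : α + d.Δ j ∈ d.Pos \ d.PhiPpos p) :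
    w (α + d.Δ j) ∈ d.NegS :=
  weng_add_simple_root_stays_negative_general d p w hw α hwα j hj hsum
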